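/- For every integer n ≥ 3 and all i, j ∈ {1, …, n−1} with (i,j) ≠ (n−1, n−1), the entries of the matrix C_n satisfy c^{(n)}_{i,j} + c^{(n)}_{1, i+j} = c^{(n)}_{i+1, j} + c^{(n)}_{i, j+1}, where by convention c^{(n)}_{a,b} := 0 whenever a or b lies outside {1, …, n}. -/

import Mathlib

/-- The entries `c^{(n)}_{i,j}` of the matrices `C_n`, defined by `C_1 = (1)` and
`C_{n+1} = (τ C_n) ⊕ (1)`, where `(τ A)_{i,j} = Σ_{s=i-1}^{n} a_{s,j}` (with the
convention `a_{0,j} = 0`). Entries with an index outside `{1, …, n}` are `0`. -/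
def cMat : ℕ → ℕ → ℕ → ℕ
  | 0, _, _ => 0
  | 1, i, j => if i = 1 ∧ j = 1 then 1 else 0
  | n + 2, i, j =>
      if 1 ≤ i ∧ i ≤ n + 1 ∧ 1 ≤ j ∧ j ≤ n + 1 then
        ∑ s ∈ Finset.Icc (i - 1) (n + 1), cMat (n + 1) s j
      else if i = n + 2 ∧ j = n + 2 then 1 else 0

/-!
The key identity is `c^{(n+1)}_{i+1,j+1} = c^{(n)}_{i,j} + c^{(n+1)}_{1,i+j+1}`, valid for
all `n, i, j` (`ShiftIdentity n`). It is proved by induction on `n`: inside the `τ`-block the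
entries of `C_{n+2}` are tail sums of the columns of `C_{n+1}`, so summing the identity for `n` over
such a tail gives the identity for `n + 1`, once one knows that the first row of `C_{n+2}` consists
of the tail sums of the first row of `C_{n+1}`; and that in turn is the identity for `n` summed
over all rows.

Subtracting two consecutive tail sums gives `c^{(n+1)}_{i,j} = c^{(n)}_{i-1,j} + c^{(n+1)}_{i+1,j}`,
and together with the key identity this is the theorem.
-/

open Finset

theorem Finset.sum_Ico_eq_sum_Ico_of_vanish {M : Type*} [AddCommMonoid M] {f : ℕ → M}
    {L a N N' : ℕ} (hf : ∀ u, L ≤ u → f u = 0) (hN : L ≤ N) (hN' : L ≤ N') :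
    ∑ u ∈ Ico a N, f u = ∑ u ∈ Ico a N', f u := by
  have h : ∀ K, L ≤ K → ∑ u ∈ Ico a K, f u = ∑ u ∈ Ico a L, f u := fun K hK =>
    (sum_subset (Ico_subset_Ico_right hK) fun u hu hu' => hf u (by simp at hu hu'; omega)).symm
  rw [h N hN, h N' hN']

theorem cMat_eq_zero {n i j : ℕ} (h : i = 0 ∨ j = 0 ∨ n < i ∨ n < j) : cMat n i j = 0 := by
  rcases n with _ | _ | n
  · rfl
  · simp only [cMat]; split_ifs <;> omega
  · simp only [cMat]; split_ifs <;> omega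

theorem cMat_eq_zero_of_le_left {n i j : ℕ} (hij : i ≠ j) (hi : n ≤ i) : cMat n i j = 0 := by
  rcases n with _ | _ | n
  · rfl
  · simp only [cMat]; split_ifs <;> omega
  · simp only [cMat]; split_ifs <;> omega

theorem cMat_eq_zero_of_le_right {n i j : ℕ} (hij : i ≠ j) (hj : n ≤ j) : cMat n i j = 0 := by
  rcases n with _ | _ | n
  · rfl
  · simp only [cMat]; split_ifs <;> omega
  · simp only [cMat]; split_ifs <;> omega

theorem cMat_self {n : ℕ} (hn : n ≠ 0) : cMat n n n = 1 := by
  rcases n with _ | _ | n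
  · omega
  · simp [cMat]
  · simp [cMat]

theorem cMat_succ_succ_of_le {n i j : ℕ} (h : n ≤ i ∨ n ≤ j) (hij : i ≠ 0 ∨ j ≠ 0) :
    cMat (n + 1) (i + 1) (j + 1) = cMat n i j := by
  rcases eq_or_ne i j with rfl | hne
  · rcases (by omega : i = n ∨ n < i) with rfl | hlt
    · rw [cMat_self (by omega), cMat_self (by omega)]
    · rw [cMat_eq_zero (by omega), cMat_eq_zero (by omega)]
  · rcases h with h | h
    · rw [cMat_eq_zero_of_le_left (by omega) (by omega), cMat_eq_zero_of_le_left hne h]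
    · rw [cMat_eq_zero_of_le_right (by omega) (by omega), cMat_eq_zero_of_le_right hne h]

theorem cMat_succ_succ_eq_sum_Ico {m i j : ℕ} (h : i < m ∨ j < m) :
    cMat (m + 1) (i + 1) j = ∑ s ∈ Ico i (m + 1), cMat m s j := by
  rcases m with _ | k
  · omega
  simp only [cMat]
  split_ifs
  · rw [Nat.add_sub_cancel, Ico_add_one_right_eq_Icc]
  · omega
  · refine (sum_eq_zero fun s hs => ?_).symm
    rw [mem_Ico] at hs
    by_cases hlast : s ≠ j ∧ k + 1 ≤ s
    · exact cMat_eq_zero_of_le_left hlast.1 hlast.2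
    · exact cMat_eq_zero (by omega)

theorem cMat_succ_eq_add_succ {m i j : ℕ} (hi : i < m) (h : i + 1 < m ∨ j < m) :
    cMat (m + 1) (i + 1) j = cMat m i j + cMat (m + 1) (i + 1 + 1) j := by
  rw [cMat_succ_succ_eq_sum_Ico (Or.inl hi), cMat_succ_succ_eq_sum_Ico h,
    sum_eq_sum_Ico_succ_bot (by omega)]

def ShiftIdentity (n : ℕ) : Prop :=
  ∀ i j, cMat (n + 1) (i + 1) (j + 1) = cMat n i j + cMat (n + 1) 1 (i + j + 1)

namespace ShiftIdentity

variable {n : ℕ}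

theorem sum_Ico_cMat_succ (h : ShiftIdentity n) (a j : ℕ) :
    ∑ s ∈ Ico (a + 1) (n + 1 + 1), cMat (n + 1) s (j + 1) =
      ∑ t ∈ Ico a (n + 1), cMat n t j +
        ∑ u ∈ Ico (a + (j + 1)) (n + 1 + (j + 1)), cMat (n + 1) 1 u := by
  rw [← sum_Ico_add', sum_congr rfl fun t _ => h t j, sum_add_distrib, ← sum_Ico_add']
  simp only [add_assoc]

theorem cMat_one_succ_eq_sum_Ico (h : ShiftIdentity n) (hn : n ≠ 0) {k N : ℕ}
    (hN : n + 1 ≤ N) :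
    cMat (n + 1 + 1) 1 (k + 1) = ∑ u ∈ Ico k N, cMat (n + 1) 1 u := by
  have hvanish : ∀ u, n + 1 ≤ u → cMat (n + 1) 1 u = 0 := fun u hu =>
    cMat_eq_zero_of_le_right (by omega) hu
  rcases le_or_gt k n with hk | hk
  · have hcol : ∀ m j, m ≠ 0 → cMat (m + 1) 1 j = ∑ s ∈ Ico 0 (m + 1), cMat m s j :=
      fun m j hm => cMat_succ_succ_eq_sum_Ico (i := 0) (Or.inl (by omega))
    rw [hcol _ _ (by omega), sum_eq_sum_Ico_succ_bot (by omega), cMat_eq_zero (Or.inl rfl),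
      zero_add, h.sum_Ico_cMat_succ, ← hcol _ _ hn, sum_eq_sum_Ico_succ_bot (by omega : k < N),
      zero_add]
    congr 1
    exact sum_Ico_eq_sum_Ico_of_vanish hvanish (by omega) (by omega)
  · rw [cMat_eq_zero_of_le_right (by omega) (by omega)]
    exact (sum_eq_zero fun u hu => hvanish u (by rw [mem_Ico] at hu; omega)).symm

theorem cMat_succ_succ_eq_add (h : ShiftIdentity n) {a j : ℕ} (ha : a < n) :
    cMat (n + 1 + 1) (a + 1 + 1) (j + 1) =
      cMat (n + 1) (a + 1) j + cMat (n + 1 + 1) 1 (a + 1 + j + 1) := by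
  rw [cMat_succ_succ_eq_sum_Ico (Or.inl (by omega)), h.sum_Ico_cMat_succ,
    ← cMat_succ_succ_eq_sum_Ico (Or.inl ha),
    h.cMat_one_succ_eq_sum_Ico (by omega) (by omega : n + 1 ≤ n + 1 + (j + 1)),
    add_right_comm a 1 j, add_assoc a j 1]

end ShiftIdentity

theorem shiftIdentity (n : ℕ) : ShiftIdentity n := by
  induction n using Nat.strong_induction_on with
  | _ n ih =>
  intro i j
  rcases eq_or_ne i 0 with rfl | hi
  · simp [cMat_eq_zero]
  by_cases hcorner : n ≤ i ∨ n ≤ j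
  · rw [cMat_succ_succ_of_le hcorner (Or.inl hi),
      cMat_eq_zero_of_le_right (n := n + 1) (i := 1) (by omega) (by omega), add_zero]
  obtain ⟨m, rfl⟩ : ∃ m, n = m + 1 := ⟨n - 1, by omega⟩
  obtain ⟨a, rfl⟩ : ∃ a, i = a + 1 := ⟨i - 1, by omega⟩
  exact (ih m (by omega)).cMat_succ_succ_eq_add (by omega)

theorem cMat_local_identity (n : ℕ) (i j : ℕ)
    (hi : i ∈ Finset.Icc 1 (n - 1)) (hj : j ∈ Finset.Icc 1 (n - 1))
    (hij : (i, j) ≠ (n - 1, n - 1)) :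
    cMat n i j + cMat n 1 (i + j) = cMat n (i + 1) j + cMat n i (j + 1) := by
  rw [Finset.mem_Icc] at hi hj
  obtain ⟨m, rfl⟩ : ∃ m, n = m + 1 := ⟨n - 1, by omega⟩
  obtain ⟨a, rfl⟩ : ∃ a, i = a + 1 := ⟨i - 1, by omega⟩
  rw [Nat.add_sub_cancel] at hi hj hij
  have hlt : a + 1 < m ∨ j < m := by
    by_contra! h
    exact hij (by rw [Prod.mk.injEq]; omega)
  rw [cMat_succ_eq_add_succ (by omega) hlt, shiftIdentity m a j, add_right_comm a 1 j]
  ring
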